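/- Let p, q ∈ [1,∞] and let p' be the conjugate exponent of p. For every nonzero signal f : V → X, the uncertainty inequality ‖f‖_p · ‖f̂‖_p / (‖f‖_q · ‖f̂‖_q) ≥ 1 / (‖U‖_{p',q} · ‖U*‖_{p',q}) holds. -/

import Mathlib

open Finset
open scoped ENNReal

/-- The `L^p` norm of a signal `f : Fin N → E` (sup-norm when `p = ∞`). -/
noncomputable def gsNorm {E : Type*} [NormedAddCommGroup E] {N : ℕ} (p : ℝ≥0∞)
    (f : Fin N → E) : ℝ :=
  if p = ∞ then ⨆ n, ‖f n‖ else (∑ n, ‖f n‖ ^ p.toReal) ^ (1 / p.toReal)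

/-- `u k` is the `k`-th column of a unitary matrix, i.e. the family of columns is
orthonormal for the standard inner product on `𝕂^N` (hence an orthonormal basis). -/
def OrthoBasis {𝕂 : Type*} [RCLike 𝕂] {N : ℕ} (u : Fin N → Fin N → 𝕂) : Prop :=
  ∀ k l : Fin N, ∑ n, (starRingEnd 𝕂) (u k n) * u l n = if k = l then (1 : 𝕂) else 0

/-- Graph Fourier transform: `f̂ k = ∑ n, conj (u k n) • f n`. -/
noncomputable def gft {𝕂 : Type*} [RCLike 𝕂] {X : Type*} [NormedAddCommGroup X]
    [NormedSpace 𝕂 X] {N : ℕ} (u : Fin N → Fin N → 𝕂) (f : Fin N → X) : Fin N → X :=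
  fun k => ∑ n, (starRingEnd 𝕂) (u k n) • f n

/-- `p`-coherence `κ_p(U)`: the maximum of the `ℓ^p` norms of the columns of `U`. -/
noncomputable def coh {𝕂 : Type*} [RCLike 𝕂] {N : ℕ} (p : ℝ≥0∞)
    (u : Fin N → Fin N → 𝕂) : ℝ :=
  ⨆ k, gsNorm p (u k)

/-- Mixed norm `‖U‖_{p,q}`: the `ℓ^q` norm of the vector of `ℓ^p` norms of the columns. -/
noncomputable def mixNorm {𝕂 : Type*} [RCLike 𝕂] {N : ℕ} (p q : ℝ≥0∞)
    (u : Fin N → Fin N → 𝕂) : ℝ :=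
  gsNorm q (fun k => gsNorm p (u k))

/-- Graph convolution of a scalar signal `α` with a signal `f`:
`(α*f)(n) = ∑ k, u k n • (α̂ k • f̂ k)`. -/
noncomputable def gconv {𝕂 : Type*} [RCLike 𝕂] {X : Type*} [NormedAddCommGroup X]
    [NormedSpace 𝕂 X] {N : ℕ} (u : Fin N → Fin N → 𝕂) (α : Fin N → 𝕂)
    (f : Fin N → X) : Fin N → X :=
  fun n => ∑ k, u k n • (gft u α k • gft u f k)

/-- Graph translation operator `T_m f (n) = ∑ k, (u k n * conj (u k m)) • f̂ k`. -/
noncomputable def gtrans {𝕂 : Type*} [RCLike 𝕂] {X : Type*} [NormedAddCommGroup X]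
    [NormedSpace 𝕂 X] {N : ℕ} (u : Fin N → Fin N → 𝕂) (m : Fin N)
    (f : Fin N → X) : Fin N → X :=
  fun n => ∑ k, (u k n * (starRingEnd 𝕂) (u k m)) • gft u f k
/-! Both `f̂` and `f = ∑ₖ u k • f̂ k` are sums of the form `∑ c • x`, so Hölder's inequality
applied entrywise and then the `ℓ^q` norm give `‖f̂‖_q ≤ ‖U‖_{p',q} ‖f‖_p` and
`‖f‖_q ≤ ‖U*‖_{p',q} ‖f̂‖_p`; multiplying the two bounds is the uncertainty inequality. -/

section gsNorm

variable {E F : Type*} [NormedAddCommGroup E] [NormedAddCommGroup F] {N : ℕ}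

lemma gsNorm_nonneg (p : ℝ≥0∞) (f : Fin N → E) : 0 ≤ gsNorm p f := by
  unfold gsNorm
  split_ifs
  · exact Real.iSup_nonneg fun n => norm_nonneg _
  · positivity

lemma norm_le_gsNorm_top (f : Fin N → E) (n : Fin N) : ‖f n‖ ≤ gsNorm ∞ f :=
  le_ciSup (f := fun n => ‖f n‖) (Set.finite_range _).bddAbove n

lemma gsNorm_one (f : Fin N → E) : gsNorm 1 f = ∑ n, ‖f n‖ := by
  simp [gsNorm]

lemma gsNorm_of_ne_top {p : ℝ≥0∞} (hp : p ≠ ∞) (f : Fin N → E) :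
    gsNorm p f = (∑ n, ‖f n‖ ^ p.toReal) ^ (1 / p.toReal) :=
  if_neg hp

lemma gsNorm_congr_norm {p : ℝ≥0∞} {f : Fin N → E} {g : Fin N → F}
    (h : ∀ n, ‖f n‖ = ‖g n‖) : gsNorm p f = gsNorm p g := by
  simp only [gsNorm, h]

lemma gsNorm_pos (p : ℝ≥0∞) {f : Fin N → E} (hf : f ≠ 0) : 0 < gsNorm p f := by
  obtain ⟨n₀, hn₀⟩ := Function.ne_iff.mp hf
  have hpos : 0 < ‖f n₀‖ := norm_pos_iff.mpr hn₀
  unfold gsNorm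
  split_ifs
  · exact hpos.trans_le (norm_le_gsNorm_top f n₀)
  · refine Real.rpow_pos_of_pos (sum_pos' (fun n _ => by positivity) ⟨n₀, mem_univ _, ?_⟩) _
    exact Real.rpow_pos_of_pos hpos _

lemma gsNorm_mono {p : ℝ≥0∞} {f : Fin N → E} {g : Fin N → F} (h : ∀ n, ‖f n‖ ≤ ‖g n‖) :
    gsNorm p f ≤ gsNorm p g := by
  unfold gsNorm
  split_ifs
  · exact ciSup_mono (Set.finite_range _).bddAbove h
  · gcongr with n
    exact h n

lemma gsNorm_smul {𝕜 : Type*} [NormedField 𝕜] [NormedSpace 𝕜 E] {p : ℝ≥0∞} (hp : p ≠ 0)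
    (c : 𝕜) (f : Fin N → E) : gsNorm p (c • f) = ‖c‖ * gsNorm p f := by
  unfold gsNorm
  split_ifs with hp_top
  · simp only [Pi.smul_apply, norm_smul, Real.mul_iSup_of_nonneg (norm_nonneg c)]
  · have ht : 0 < p.toReal := ENNReal.toReal_pos hp hp_top
    simp only [Pi.smul_apply, norm_smul, Real.mul_rpow (norm_nonneg _) (norm_nonneg _),
      ← mul_sum]
    rw [Real.mul_rpow (by positivity) (by positivity), one_div,
      Real.rpow_rpow_inv (norm_nonneg _) ht.ne']

lemma gsNorm_le_gsNorm_mul_of_norm_le {p : ℝ≥0∞} (hp : p ≠ 0) {f : Fin N → E}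
    {g : Fin N → ℝ} {c : ℝ} (hc : 0 ≤ c) (h : ∀ n, ‖f n‖ ≤ g n * c) :
    gsNorm p f ≤ gsNorm p g * c := calc
  gsNorm p f ≤ gsNorm p (c • g) :=
    gsNorm_mono fun n => (h n).trans <| by
      rw [Pi.smul_apply, smul_eq_mul, mul_comm]
      exact Real.le_norm_self _
  _ = gsNorm p g * c := by rw [gsNorm_smul hp, Real.norm_of_nonneg hc, mul_comm]

lemma sum_norm_mul_norm_le_gsNorm_top_mul_gsNorm_one (a : Fin N → E) (b : Fin N → F) :
    ∑ n, ‖a n‖ * ‖b n‖ ≤ gsNorm ∞ a * gsNorm 1 b := by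
  rw [gsNorm_one, mul_sum]
  gcongr with n
  exact norm_le_gsNorm_top a n

lemma sum_norm_mul_norm_le_gsNorm_mul_gsNorm {p q : ℝ≥0∞} [p.HolderConjugate q]
    (a : Fin N → E) (b : Fin N → F) :
    ∑ n, ‖a n‖ * ‖b n‖ ≤ gsNorm p a * gsNorm q b := by
  rcases eq_or_ne p ∞ with rfl | hp
  · obtain rfl : q = 1 := (ENNReal.HolderConjugate.eq_top_iff_eq_one ∞ q).mp rfl
    exact sum_norm_mul_norm_le_gsNorm_top_mul_gsNorm_one a b
  rcases eq_or_ne q ∞ with rfl | hq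
  · obtain rfl : p = 1 := (ENNReal.HolderConjugate.eq_top_iff_eq_one ∞ p).mp rfl
    simpa only [mul_comm] using sum_norm_mul_norm_le_gsNorm_top_mul_gsNorm_one b a
  rw [gsNorm_of_ne_top hp, gsNorm_of_ne_top hq]
  exact Real.inner_le_Lp_mul_Lq_of_nonneg _ (ENNReal.HolderConjugate.toReal_of_ne_top hp hq)
    (fun n _ => norm_nonneg _) (fun n _ => norm_nonneg _)

lemma norm_sum_smul_le_gsNorm_mul_gsNorm {𝕜 : Type*} [NormedField 𝕜] [NormedSpace 𝕜 E]
    {p q : ℝ≥0∞} [p.HolderConjugate q] (c : Fin N → 𝕜) (x : Fin N → E) :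
    ‖∑ n, c n • x n‖ ≤ gsNorm p c * gsNorm q x := calc
  ‖∑ n, c n • x n‖ ≤ ∑ n, ‖c n‖ * ‖x n‖ := by
    simpa only [norm_smul] using norm_sum_le univ fun n => c n • x n
  _ ≤ gsNorm p c * gsNorm q x := sum_norm_mul_norm_le_gsNorm_mul_gsNorm c x

end gsNorm

section gft

variable {𝕂 : Type*} [RCLike 𝕂] {X : Type*} [NormedAddCommGroup X] [NormedSpace 𝕂 X] {N : ℕ}
  {u : Fin N → Fin N → 𝕂}

abbrev colMatrix (u : Fin N → Fin N → 𝕂) : Matrix (Fin N) (Fin N) 𝕂 :=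
  Matrix.of fun n k => u k n

lemma OrthoBasis.conjTranspose_mul_self (hU : OrthoBasis u) :
    (colMatrix u).conjTranspose * colMatrix u = 1 := by
  ext k l
  simpa [Matrix.mul_apply, Matrix.one_apply] using hU k l

/-- In finite dimension `UᴴU = 1` forces `UUᴴ = 1`. -/
lemma OrthoBasis.sum_mul_conj (hU : OrthoBasis u) (n m : Fin N) :
    ∑ k, u k n * (starRingEnd 𝕂) (u k m) = if n = m then 1 else 0 := by
  have h : colMatrix u * (colMatrix u).conjTranspose = 1 :=
    mul_eq_one_comm.mp hU.conjTranspose_mul_self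
  simpa [Matrix.mul_apply, Matrix.one_apply] using congrArg (· n m) h

lemma OrthoBasis.sum_smul_gft (hU : OrthoBasis u) (f : Fin N → X) (n : Fin N) :
    ∑ k, u k n • gft u f k = f n := calc
  ∑ k, u k n • gft u f k = ∑ m, (∑ k, u k n * (starRingEnd 𝕂) (u k m)) • f m := by
    simp only [gft, smul_sum, smul_smul, sum_smul]
    exact sum_comm
  _ = f n := by simp [hU.sum_mul_conj, ite_smul]

lemma OrthoBasis.gft_ne_zero (hU : OrthoBasis u) {f : Fin N → X} (hf : f ≠ 0) :
    gft u f ≠ 0 := by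
  refine fun h => hf (funext fun n => ?_)
  rw [← hU.sum_smul_gft f n, h]
  simp

variable {p p' q : ℝ≥0∞} [p'.HolderConjugate p]

lemma gsNorm_gft_le (hq : q ≠ 0) (f : Fin N → X) :
    gsNorm q (gft u f) ≤ mixNorm p' q u * gsNorm p f := by
  refine gsNorm_le_gsNorm_mul_of_norm_le hq (gsNorm_nonneg _ _) fun k => ?_
  calc ‖gft u f k‖ ≤ gsNorm p' (fun n => (starRingEnd 𝕂) (u k n)) * gsNorm p f :=
        norm_sum_smul_le_gsNorm_mul_gsNorm _ f
    _ = gsNorm p' (u k) * gsNorm p f := by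
        rw [gsNorm_congr_norm fun n => RCLike.norm_conj (u k n)]

lemma OrthoBasis.gsNorm_le_gsNorm_gft (hU : OrthoBasis u) (hq : q ≠ 0) (f : Fin N → X) :
    gsNorm q f ≤ mixNorm p' q (fun n k => u k n) * gsNorm p (gft u f) := by
  refine gsNorm_le_gsNorm_mul_of_norm_le hq (gsNorm_nonneg _ _) fun n => ?_
  rw [← hU.sum_smul_gft f n]
  exact norm_sum_smul_le_gsNorm_mul_gsNorm _ _

end gft

theorem gft_uncertainty_three_general {𝕂 : Type*} [RCLike 𝕂] {X : Type*} [NormedAddCommGroup X]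
    [NormedSpace 𝕂 X] {N : ℕ}
    (u : Fin N → Fin N → 𝕂) (hU : OrthoBasis u)
    (p p' q : ℝ≥0∞) (hq : 1 ≤ q) (hpp' : 1 / p + 1 / p' = 1) :
    ∀ f : Fin N → X, f ≠ 0 →
      (gsNorm p f * gsNorm p (gft u f)) / (gsNorm q f * gsNorm q (gft u f)) ≥
        1 / (mixNorm p' q u * mixNorm p' q (fun n k => u k n)) := by
  intro f hf
  have : p'.HolderConjugate p := by
    rw [ENNReal.holderConjugate_iff, add_comm]
    simpa only [one_div] using hpp'
  have hq0 : q ≠ 0 := (zero_lt_one.trans_le hq).ne'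
  set M := mixNorm p' q u * mixNorm p' q (fun n k => u k n)
  have hfp := gsNorm_pos p hf
  have hFp := gsNorm_pos p (hU.gft_ne_zero hf)
  have hfq := gsNorm_pos q hf
  have hFq := gsNorm_pos q (hU.gft_ne_zero hf)
  have hbound : gsNorm q f * gsNorm q (gft u f) ≤ M * (gsNorm p f * gsNorm p (gft u f)) := calc
    gsNorm q f * gsNorm q (gft u f)
        ≤ (mixNorm p' q (fun n k => u k n) * gsNorm p (gft u f)) *
          (mixNorm p' q u * gsNorm p f) :=
      mul_le_mul (hU.gsNorm_le_gsNorm_gft hq0 f) (gsNorm_gft_le hq0 f) hFq.le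
        (mul_nonneg (gsNorm_nonneg _ _) hFp.le)
    _ = M * (gsNorm p f * gsNorm p (gft u f)) := by ring
  have hM : 0 < M := pos_of_mul_pos_left ((mul_pos hfq hFq).trans_le hbound) (mul_pos hfp hFp).le
  rw [ge_iff_le, div_le_div_iff₀ hM (mul_pos hfq hFq), one_mul]
  exact hbound.trans_eq (mul_comm _ _)

/-- uncertainty principle
`‖f‖_p‖f̂‖_p / (‖f‖_q‖f̂‖_q) ≥ 1/(‖U‖_{p',q}·‖U*‖_{p',q})`. -/
theorem gft_uncertainty_three {𝕂 : Type*} [RCLike 𝕂] {X : Type*} [NormedAddCommGroup X]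
    [NormedSpace 𝕂 X] [CompleteSpace X] {N : ℕ} (hN : 0 < N)
    (u : Fin N → Fin N → 𝕂) (hU : OrthoBasis u)
    (p p' q : ℝ≥0∞) (hp : 1 ≤ p) (hq : 1 ≤ q) (hpp' : 1 / p + 1 / p' = 1) :
    ∀ f : Fin N → X, f ≠ 0 →
      (gsNorm p f * gsNorm p (gft u f)) / (gsNorm q f * gsNorm q (gft u f)) ≥
        1 / (mixNorm p' q u * mixNorm p' q (fun n k => u k n)) :=
  gft_uncertainty_three_general u hU p p' q hq hpp'
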